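/- arXiv:math/0002222 — 5 statements merged into one kernel-verified Lean document; each statement's English description precedes it below -/
import Mathlib

section
/- Let n ≥ 1 and λ ∈ ℂⁿ. The Jordan–Pochhammer matrices satisfy the infinitesimal braid relations: (a) [J_{ij}(λ), J_{kl}(λ)] = 0 whenever {i,j} ∩ {k,l} = ∅; (b) [J_{ij}(λ), J_{ij}(λ) + J_{jk}(λ) + J_{ki}(λ)] = 0 whenever i, j, k are pairwise distinct. Here [A,B] = AB − BA denotes the commutator of matrices. -/
/-!
`J_{ij}(λ)` is the rank-one matrix `u vᵀ` with column `u = λ_j e_i - λ_i e_j` (`jpCol`) and row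
`v = e_i - e_j` (`jpRow`). For rank-one matrices `[u vᵀ, u' v'ᵀ] = (v ⬝ u') u v'ᵀ - (v' ⬝ u) u' vᵀ`,
and `(e_i - e_j) ⬝ w = w_i - w_j`. When `{i,j}` and `{k,l}` are disjoint both dot products vanish.
For a triangle `i, j, k`, the commutators `[J_{ij}, J_{jk}]` and `[J_{ij}, J_{ki}]` cancel because
`v_{jk} + v_{ki} = -v_{ij}` and `λ_i u_{jk} + λ_j u_{ki} = -λ_k u_{ij}`.
-/

/-- The Jordan–Pochhammer matrix `J_{ij}(λ)`: for `i ≠ j` its only nonzero entries are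
the `(i,i)`-entry `λ j`, the `(i,j)`-entry `-λ j`, the `(j,i)`-entry `-λ i` and the
`(j,j)`-entry `λ i`; and `J_{ii}(λ) = 0`.  This formula is symmetric in `i, j`, so
`J_{ij}(λ) = J_{ji}(λ)`. -/
def JP (n : ℕ) (lam : Fin n → ℂ) (i j : Fin n) : Matrix (Fin n) (Fin n) ℂ :=
  if i = j then 0 else
    Matrix.of fun a b =>
      if a = i ∧ b = i then lam j
      else if a = i ∧ b = j then - lam j
      else if a = j ∧ b = i then - lam i
      else if a = j ∧ b = j then lam i
      else 0

open Matrix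

theorem vecMulVec_mul_sub_mul_vecMulVec {m R : Type*} [Fintype m] [CommRing R]
    (u v u' v' : m → R) :
    vecMulVec u v * vecMulVec u' v' - vecMulVec u' v' * vecMulVec u v =
      (v ⬝ᵥ u') • vecMulVec u v' - (v' ⬝ᵥ u) • vecMulVec u' v := by
  simp only [vecMulVec_mul_vecMulVec, vecMulVec_smul]

section JordanPochhammer

variable {n : ℕ} (lam : Fin n → ℂ)

def jpCol (i j : Fin n) : Fin n → ℂ := lam j • Pi.single i 1 - lam i • Pi.single j 1

def jpRow (i j : Fin n) : Fin n → ℂ := Pi.single i 1 - Pi.single j 1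

theorem jpCol_apply_of_ne {i j a : Fin n} (hi : a ≠ i) (hj : a ≠ j) : jpCol lam i j a = 0 := by
  simp [jpCol, hi, hj]

theorem jpCol_apply_left {i j : Fin n} (hij : i ≠ j) : jpCol lam i j i = lam j := by
  simp [jpCol, hij]

theorem jpCol_apply_right {i j : Fin n} (hij : i ≠ j) : jpCol lam i j j = -lam i := by
  simp [jpCol, hij.symm]

theorem jpRow_dotProduct (i j : Fin n) (w : Fin n → ℂ) : jpRow i j ⬝ᵥ w = w i - w j := by
  simp [jpRow, sub_dotProduct]

theorem JP_eq_vecMulVec (i j : Fin n) : JP n lam i j = vecMulVec (jpCol lam i j) (jpRow i j) := by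
  by_cases hij : i = j
  · subst hij
    simp [JP, jpCol]
  ext a b
  by_cases hai : a = i <;> by_cases haj : a = j <;> by_cases hbi : b = i <;> by_cases hbj : b = j <;>
    simp_all [JP, jpCol, jpRow, vecMulVec_apply]

theorem JP_mul_sub_mul_JP (i j k l : Fin n) :
    JP n lam i j * JP n lam k l - JP n lam k l * JP n lam i j =
      (jpRow i j ⬝ᵥ jpCol lam k l) • vecMulVec (jpCol lam i j) (jpRow k l) -
        (jpRow k l ⬝ᵥ jpCol lam i j) • vecMulVec (jpCol lam k l) (jpRow i j) := by
  simp only [JP_eq_vecMulVec, vecMulVec_mul_sub_mul_vecMulVec]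

theorem JP_commute_of_disjoint {i j k l : Fin n} (hik : i ≠ k) (hil : i ≠ l) (hjk : j ≠ k)
    (hjl : j ≠ l) : JP n lam i j * JP n lam k l - JP n lam k l * JP n lam i j = 0 := by
  have hij_kl : jpRow i j ⬝ᵥ jpCol lam k l = 0 := by
    rw [jpRow_dotProduct, jpCol_apply_of_ne lam hik hil, jpCol_apply_of_ne lam hjk hjl, sub_zero]
  have hkl_ij : jpRow k l ⬝ᵥ jpCol lam i j = 0 := by
    rw [jpRow_dotProduct, jpCol_apply_of_ne lam hik.symm hjk.symm,
      jpCol_apply_of_ne lam hil.symm hjl.symm, sub_zero]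
  rw [JP_mul_sub_mul_JP, hij_kl, hkl_ij, zero_smul, zero_smul, sub_zero]

theorem JP_commute_triangle_sum {i j k : Fin n} (hij : i ≠ j) (hjk : j ≠ k) (hik : i ≠ k) :
    JP n lam i j * (JP n lam i j + JP n lam j k + JP n lam k i) -
      (JP n lam i j + JP n lam j k + JP n lam k i) * JP n lam i j = 0 := by
  have hsplit : ∀ A B C : Matrix (Fin n) (Fin n) ℂ,
      A * (A + B + C) - (A + B + C) * A = (A * B - B * A) + (A * C - C * A) := by
    intro A B C; noncomm_ring
  rw [hsplit, JP_mul_sub_mul_JP, JP_mul_sub_mul_JP]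
  simp only [jpRow_dotProduct, jpCol_apply_left, jpCol_apply_right, jpCol_apply_of_ne, hij, hjk,
    hik, hij.symm, hjk.symm, hik.symm, ne_eq, not_false_eq_true]
  simp only [jpCol, jpRow, sub_vecMulVec, vecMulVec_sub, smul_vecMulVec]
  module

end JordanPochhammer

theorem jordan_pochhammer_infinitesimal_braid_relations_general
    (n : ℕ) (lam : Fin n → ℂ) :
    (∀ i j k l : Fin n, ({i, j} : Set (Fin n)) ∩ {k, l} = ∅ →
      JP n lam i j * JP n lam k l - JP n lam k l * JP n lam i j = 0) ∧
    (∀ i j k : Fin n, i ≠ j → j ≠ k → i ≠ k →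
      JP n lam i j * (JP n lam i j + JP n lam j k + JP n lam k i) -
        (JP n lam i j + JP n lam j k + JP n lam k i) * JP n lam i j = 0) := by
  refine ⟨fun i j k l h => ?_, fun i j k => JP_commute_triangle_sum lam⟩
  simp only [← Set.disjoint_iff_inter_eq_empty, Set.disjoint_insert_left,
    Set.disjoint_singleton_left, Set.mem_insert_iff, Set.mem_singleton_iff, not_or] at h
  obtain ⟨⟨hik, hil⟩, hjk, hjl⟩ := h
  exact JP_commute_of_disjoint lam hik hil hjk hjl

/-- The Jordan–Pochhammer matrices satisfy the infinitesimal braid relations. -/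
theorem jordan_pochhammer_infinitesimal_braid_relations
    (n : ℕ) (hn : 1 ≤ n) (lam : Fin n → ℂ) :
    (∀ i j k l : Fin n, ({i, j} : Set (Fin n)) ∩ {k, l} = ∅ →
      JP n lam i j * JP n lam k l - JP n lam k l * JP n lam i j = 0) ∧
    (∀ i j k : Fin n, i ≠ j → j ≠ k → i ≠ k →
      JP n lam i j * (JP n lam i j + JP n lam j k + JP n lam k i) -
        (JP n lam i j + JP n lam j k + JP n lam k i) * JP n lam i j = 0) :=
  jordan_pochhammer_infinitesimal_braid_relations_general n lam
end

section
/- Let V be a finite-dimensional complex vector space and let A_{ij} ∈ End(V), 1 ≤ i, j ≤ n, satisfy A_{ii} = 0 and A_{ij} = A_{ji}. For z ∈ ℂⁿ with pairwise distinct coordinates and u ∈ ℂⁿ, set ω_z(u) = Σ_{1≤i<j≤n} ((u_i − u_j)/(z_i − z_j)) · A_{ij} ∈ End(V). Then the connection with connection form ω = Σ_{i<j} (dz_i − dz_j)/(z_i − z_j) ⊗ A_{ij} on the trivial V-bundle over ℂⁿ_* is flat — equivalently, ω_z(u) ∘ ω_z(v) = ω_z(v) ∘ ω_z(u) for all z ∈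 ℂⁿ with pairwise distinct coordinates and all u, v ∈ ℂⁿ — if and only if the A_{ij} satisfy the infinitesimal braid relations: [A_{ij}, A_{kl}] = 0 whenever {i,j} ∩ {k,l} = ∅, and [A_{ij}, A_{ij} + A_{jk} + A_{ki}] = 0 whenever i, j, k are pairwise distinct. -/
/-- The value of the connection form
`ω = ∑_{i<j} (dz_i − dz_j)/(z_i − z_j) ⊗ A_{ij}` at the point `z`, evaluated on the
tangent vector `u`; an endomorphism of `V`. -/
noncomputable def omegaEnd (n : ℕ) (V : Type*) [AddCommGroup V] [Module ℂ V]
    (A : Fin n → Fin n → Module.End ℂ V) (z u : Fin n → ℂ) : Module.End ℂ V :=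
  ∑ p ∈ Finset.univ.filter (fun p : Fin n × Fin n => p.1 < p.2),
    ((u p.1 - u p.2) / (z p.1 - z p.2)) • A p.1 p.2

/-!
Since `ω_z(u) = ∑_i u_i H_i(z)` with the Gaudin Hamiltonians
`H_i(z) = ∑_{b ≠ i} A_{ib}/(z_i − z_b)`, flatness says that the `H_i(z)` commute pairwise.
Expanding `[H_i, H_k]`, the relation for disjoint pairs kills every term except those of the form
`[A_{ik}, A_{km}]`, `[A_{im}, A_{ki}]`, `[A_{im}, A_{km}]`; the triangle relation makes these three
brackets equal up to sign, and their coefficients then cancel by the Arnold relation.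

Conversely, clearing denominators turns `[H_i(z), H_k(z)] = 0` into a polynomial identity in `z`,
which extends from the Zariski-dense set of injective `z` to all of `ℂⁿ`. Evaluating it at a point
with `z_j = z_i` and `z_l = z_k` isolates `[A_{ij}, A_{kl}]`, and at a point with only `z_j = z_i`
it isolates `[A_{ij}, A_{ki} + A_{kj}]`: this is taking residues along the diagonals.
-/

open Finset MvPolynomial

theorem MvPolynomial.eq_zero_of_eval_eq_zero_of_injective {σ R : Type*} [Finite σ] [CommRing R]
    [IsDomain R] [Infinite R] {p : MvPolynomial σ R}
    (h : ∀ x : σ → R, Function.Injective x → eval x p = 0) : p = 0 := by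
  classical
  have := Fintype.ofFinite σ
  let W : MvPolynomial σ R := ∏ q ∈ univ.filter (fun q : σ × σ => q.1 ≠ q.2), (X q.1 - X q.2)
  have hW : W ≠ 0 := prod_ne_zero_iff.mpr fun q hq =>
    sub_ne_zero.mpr (X_injective.ne (mem_filter.mp hq).2)
  have hpW : p * W = 0 := MvPolynomial.funext fun x => by
    by_cases hx : Function.Injective x
    · simp [h x hx]
    · obtain ⟨a, b, hab, hne⟩ := Function.not_injective_iff.mp hx
      have hWx : eval x W = 0 := by
        rw [map_prod]
        exact prod_eq_zero (i := (a, b)) (by simp [hne]) (by simp [hab])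
      simp [hWx]
  exact (mul_eq_zero.mp hpW).resolve_right hW

theorem Finset.sum_eq_sum_filter_lt_add_swap {α M : Type*} [Fintype α] [LinearOrder α]
    [AddCommMonoid M] (f : α × α → M) (hf : ∀ a, f (a, a) = 0) :
    ∑ p, f p = ∑ p ∈ univ.filter (fun p : α × α => p.1 < p.2), (f p + f p.swap) := by
  calc ∑ p, f p
      = ∑ p : α × α, ((if p.1 < p.2 then f p else 0) + if p.2 < p.1 then f p else 0) := by
        refine sum_congr rfl fun p _ => ?_
        rcases lt_trichotomy p.1 p.2 with h | h | h
        · simp [h, h.not_gt]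
        · obtain ⟨a, b⟩ := p
          simp only at h
          simp [h, hf]
        · simp [h, h.not_gt]
    _ = ∑ p : α × α, ((if p.1 < p.2 then f p else 0) + if p.1 < p.2 then f p.swap else 0) := by
        rw [sum_add_distrib, sum_add_distrib]
        congr 1
        exact Fintype.sum_equiv (Equiv.prodComm α α) _ _ fun p => rfl
    _ = _ := by
        rw [sum_filter]
        exact sum_congr rfl fun p _ => by split_ifs <;> simp

theorem Finset.prod_erase_eq_prod_erase {ι M : Type*} [DecidableEq ι] [CommMonoid M]
    {s : Finset ι} {f : ι → M} {a b : ι} (ha : a ∈ s) (hb : b ∈ s) (hab : f a = f b) :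
    ∏ x ∈ s.erase a, f x = ∏ x ∈ s.erase b, f x := by
  rcases eq_or_ne a b with rfl | hne
  · rfl
  rw [← mul_prod_erase (s.erase a) f (mem_erase.mpr ⟨hne.symm, hb⟩),
    ← mul_prod_erase (s.erase b) f (mem_erase.mpr ⟨hne, ha⟩), erase_right_comm, hab]

theorem exists_injective_of_infinite (ι K : Type*) [Finite ι] [Infinite K] :
    ∃ w : ι → K, Function.Injective w :=
  let ⟨f, hf⟩ := exists_injective_nat ι
  ⟨Infinite.natEmbedding K ∘ f, (Infinite.natEmbedding K).injective.comp hf⟩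

namespace Kohno

/-- The term `b = i` of the sum vanishes because `0⁻¹ = 0`. -/
noncomputable def gaudinHamiltonian {ι K L : Type*} [Fintype ι] [Field K] [AddCommGroup L]
    [Module K L] (A : ι → ι → L) (z : ι → K) (i : ι) : L :=
  ∑ b, (z i - z b)⁻¹ • A i b

structure InfinitesimalBraidRelations {ι L : Type*} [LieRing L] (A : ι → ι → L) : Prop where
  lie_eq_zero : ∀ i j k l, i ≠ k → i ≠ l → j ≠ k → j ≠ l → ⁅A i j, A k l⁆ = 0
  lie_add_add_eq_zero : ∀ i j k, i ≠ j → j ≠ k → i ≠ k → ⁅A i j, A i j + A j k + A k i⁆ = 0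

theorem arnold_identity {K : Type*} [Field K] {a b c : K} (hab : a ≠ b) (hbc : b ≠ c)
    (hac : a ≠ c) :
    (a - b)⁻¹ * (b - c)⁻¹ + (a - c)⁻¹ * (b - a)⁻¹ = (a - c)⁻¹ * (b - c)⁻¹ := by
  rw [← neg_sub a b, inv_neg]
  field_simp [sub_ne_zero.mpr hab, sub_ne_zero.mpr hbc, sub_ne_zero.mpr hac]
  ring

section LieAlgebra

variable {ι K L : Type*} [Field K] [LieRing L] [LieAlgebra K L] {A : ι → ι → L}

theorem InfinitesimalBraidRelations.lie_add_lie_eq_zero (hB : InfinitesimalBraidRelations A)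
    {i j k : ι} (hij : i ≠ j) (hjk : j ≠ k) (hik : i ≠ k) :
    ⁅A i j, A j k⁆ + ⁅A i j, A k i⁆ = 0 := by
  simpa [add_assoc] using hB.lie_add_add_eq_zero i j k hij hjk hik

theorem InfinitesimalBraidRelations.sum_triangle_eq_zero (hAsymm : ∀ i j, A i j = A j i)
    (hB : InfinitesimalBraidRelations A) {z : ι → K} (hz : Function.Injective z) {i k m : ι}
    (hik : i ≠ k) (hkm : k ≠ m) (him : i ≠ m) :
    ((z i - z k)⁻¹ * (z k - z m)⁻¹) • ⁅A i k, A k m⁆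
      + ((z i - z m)⁻¹ * (z k - z i)⁻¹) • ⁅A i m, A k i⁆
      + ((z i - z m)⁻¹ * (z k - z m)⁻¹) • ⁅A i m, A k m⁆ = 0 := by
  have h₁ : ⁅A i k, A k m⁆ = -⁅A i m, A k m⁆ := by
    have := hB.lie_add_lie_eq_zero hkm him.symm hik.symm
    rw [hAsymm m i, ← lie_skew (A k m) (A i k), ← lie_skew (A k m) (A i m)] at *
    linear_combination (norm := module) -this
  have h₂ : ⁅A i m, A k i⁆ = -⁅A i m, A k m⁆ := by
    have := hB.lie_add_lie_eq_zero him hkm.symm hik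
    rw [hAsymm m k] at this
    linear_combination (norm := module) this
  have harnold := arnold_identity (hz.ne hik) (hz.ne hkm) (hz.ne him)
  linear_combination (norm := module) ((z i - z k)⁻¹ * (z k - z m)⁻¹) • h₁
    + ((z i - z m)⁻¹ * (z k - z i)⁻¹) • h₂ - harnold • ⁅A i m, A k m⁆

variable [Fintype ι]

theorem lie_gaudinHamiltonian (A : ι → ι → L) (z : ι → K) (i k : ι) :
    ⁅gaudinHamiltonian A z i, gaudinHamiltonian A z k⁆
      = ∑ a, ∑ b, ((z i - z a)⁻¹ * (z k - z b)⁻¹) • ⁅A i a, A k b⁆ := by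
  simp only [gaudinHamiltonian, sum_lie, lie_sum, smul_lie, lie_smul, smul_sum, smul_smul]
  rw [sum_comm]
  exact sum_congr rfl fun a _ => sum_congr rfl fun b _ => by rw [mul_comm]

variable [DecidableEq ι]

theorem InfinitesimalBraidRelations.lie_gaudinHamiltonian_eq_zero
    (hAsymm : ∀ i j, A i j = A j i) (hB : InfinitesimalBraidRelations A) {z : ι → K}
    (hz : Function.Injective z) (i k : ι) :
    ⁅gaudinHamiltonian A z i, gaudinHamiltonian A z k⁆ = 0 := by
  rcases eq_or_ne i k with rfl | hik
  · exact lie_self _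
  rw [lie_gaudinHamiltonian]
  set s : ι → ι → L := fun a b => ((z i - z a)⁻¹ * (z k - z b)⁻¹) • ⁅A i a, A k b⁆
  have hsii : s i i = 0 := by simp [s]
  have hskk : s k k = 0 := by simp [s]
  have hski : s k i = 0 := by simp [s, hAsymm k i]
  have hoff : ∀ a b, a ≠ k → b ≠ i → b ≠ a → s a b = 0 := fun a b hak hbi hba => by
    simp [s, hB.lie_eq_zero i a k b hik (Ne.symm hbi) hak (Ne.symm hba)]
  -- only the terms with `a = k`, `b = i` or `b = a` survive, and those lying on two of these
  -- lines vanish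
  have hs : ∀ a b, s a b = (if a = k then s a b else 0) + (if b = i then s a b else 0)
      + (if b = a then s a b else 0) := by
    intro a b
    split_ifs <;> subst_vars <;> simp [*]
  calc ∑ a, ∑ b, s a b
      = ∑ a, ∑ b, ((if a = k then s a b else 0) + (if b = i then s a b else 0)
          + (if b = a then s a b else 0)) :=
        sum_congr rfl fun a _ => sum_congr rfl fun b _ => hs a b
    _ = ∑ m, (s k m + s m i + s m m) := by
        simp only [sum_add_distrib, sum_ite_irrel, sum_const_zero, sum_ite_eq', mem_univ, if_true]
    _ = 0 := sum_eq_zero fun m _ => by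
        rcases eq_or_ne m i with rfl | hmi
        · simp [hski, hsii]
        rcases eq_or_ne m k with rfl | hmk
        · simp [hski, hskk]
        exact hB.sum_triangle_eq_zero hAsymm hz hik hmk.symm hmi.symm

end LieAlgebra

section Residues

variable {ι K M : Type*} [Fintype ι] [DecidableEq ι] [Field K] [AddCommGroup M] [Module K M]

theorem prod_erase_erase_sub_eq_zero_iff (ζ : ι → K) (i a : ι) :
    ∏ m ∈ (univ.erase i).erase a, (ζ i - ζ m) = 0 ↔ ∃ m, m ≠ a ∧ m ≠ i ∧ ζ m = ζ i := by
  simp only [prod_eq_zero_iff, mem_erase, mem_univ, sub_eq_zero]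
  exact ⟨fun ⟨m, ⟨ha, hi, _⟩, h⟩ => ⟨m, ha, hi, h.symm⟩,
    fun ⟨m, ha, hi, h⟩ => ⟨m, ⟨ha, hi, trivial⟩, h.symm⟩⟩

theorem prod_erase_erase_sub_eq {z : ι → K} (hz : Function.Injective z) {i a : ι} (hai : a ≠ i) :
    ∏ m ∈ (univ.erase i).erase a, (z i - z m)
      = (∏ m ∈ univ.erase i, (z i - z m)) * (z i - z a)⁻¹ := by
  rw [← mul_prod_erase (univ.erase i) (fun m => z i - z m) (mem_erase.mpr ⟨hai, mem_univ a⟩),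
    mul_comm (z i - z a), mul_inv_cancel_right₀ (sub_ne_zero.mpr (hz.ne hai.symm))]

variable [Infinite K]

/-- After clearing denominators the hypothesis is a polynomial identity in `z`, so it also holds
at points `ζ` with repeated coordinates. -/
theorem sum_sum_prod_erase_erase_smul_eq_zero {c : ι → ι → M} {i k : ι}
    (hc : ∀ z : ι → K, Function.Injective z →
      ∑ a, ∑ b, ((z i - z a)⁻¹ * (z k - z b)⁻¹) • c a b = 0) (ζ : ι → K) :
    ∑ a ∈ univ.erase i, ∑ b ∈ univ.erase k,
      ((∏ m ∈ (univ.erase i).erase a, (ζ i - ζ m)) * ∏ m ∈ (univ.erase k).erase b, (ζ k - ζ m))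
        • c a b = 0 := by
  refine (Module.forall_dual_apply_eq_zero_iff K _).mp fun φ => ?_
  let P : MvPolynomial ι K := ∑ a ∈ univ.erase i, ∑ b ∈ univ.erase k,
    ((∏ m ∈ (univ.erase i).erase a, (X i - X m)) * ∏ m ∈ (univ.erase k).erase b, (X k - X m))
      * C (φ (c a b))
  have heval : ∀ x, eval x P = φ (∑ a ∈ univ.erase i, ∑ b ∈ univ.erase k,
      ((∏ m ∈ (univ.erase i).erase a, (x i - x m)) * ∏ m ∈ (univ.erase k).erase b, (x k - x m))
        • c a b) := by
    intro x
    simp only [P, map_sum, map_mul, map_prod, map_sub, eval_X, eval_C, map_smul, smul_eq_mul]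
  rw [← heval, MvPolynomial.eq_zero_of_eval_eq_zero_of_injective (p := P) fun z hz => ?_,
    map_zero]
  rw [heval]
  have hterm : ∀ a ∈ univ.erase i, ∀ b ∈ univ.erase k,
      ((∏ m ∈ (univ.erase i).erase a, (z i - z m)) * ∏ m ∈ (univ.erase k).erase b, (z k - z m))
        • c a b = ((∏ m ∈ univ.erase i, (z i - z m)) * ∏ m ∈ univ.erase k, (z k - z m))
          • ((z i - z a)⁻¹ * (z k - z b)⁻¹) • c a b := fun a ha b hb => by
    rw [prod_erase_erase_sub_eq hz (ne_of_mem_erase ha),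
      prod_erase_erase_sub_eq hz (ne_of_mem_erase hb), smul_smul]
    ring_nf
  rw [sum_congr rfl fun a ha => sum_congr rfl fun b hb => hterm a ha b hb]
  simp only [← smul_sum]
  rw [sum_erase _ (by simp), sum_congr rfl fun a _ => sum_erase _ (by simp), hc z hz, smul_zero,
    map_zero]

/-- Evaluation at a point with `ζ_j = ζ_i` and `ζ_l = ζ_k`. -/
theorem eq_zero_of_forall_sum_sum_inv_smul_eq_zero {c : ι → ι → M} {i j k l : ι}
    (hc : ∀ z : ι → K, Function.Injective z →
      ∑ a, ∑ b, ((z i - z a)⁻¹ * (z k - z b)⁻¹) • c a b = 0)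
    (hij : i ≠ j) (hik : i ≠ k) (hil : i ≠ l) (hjk : j ≠ k) (hjl : j ≠ l) (hkl : k ≠ l) :
    c j l = 0 := by
  obtain ⟨w, hw⟩ := exists_injective_of_infinite ι K
  set ζ : ι → K := fun m => w (if m = j then i else if m = l then k else m)
  have h := sum_sum_prod_erase_erase_smul_eq_zero hc ζ
  rw [sum_eq_single_of_mem j (mem_erase.mpr ⟨hij.symm, mem_univ j⟩) ?_,
    sum_eq_single_of_mem l (mem_erase.mpr ⟨hkl.symm, mem_univ l⟩) ?_] at h
  · refine (smul_eq_zero.mp h).resolve_left (mul_ne_zero ?_ ?_) <;>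
      rw [Ne, prod_erase_erase_sub_eq_zero_iff] <;> rintro ⟨m, hm₁, hm₂, hm⟩ <;>
      simp only [ζ, hw.eq_iff] at hm <;> split_ifs at hm <;> simp_all
  · intro b _ hbl
    rw [(prod_erase_erase_sub_eq_zero_iff ζ k b).mpr
        ⟨l, hbl.symm, hkl.symm, by simp [ζ, hjl.symm, hjk.symm]⟩, mul_zero, zero_smul]
  · intro a _ haj
    refine sum_eq_zero fun b _ => ?_
    rw [(prod_erase_erase_sub_eq_zero_iff ζ i a).mpr ⟨j, haj.symm, hij.symm, by simp [ζ, hij, hil]⟩,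
      zero_mul, zero_smul]

/-- Evaluation at a point with `ζ_j = ζ_i`. -/
theorem add_eq_zero_of_forall_sum_sum_inv_smul_eq_zero {c : ι → ι → M} {i j k : ι}
    (hc : ∀ z : ι → K, Function.Injective z →
      ∑ a, ∑ b, ((z i - z a)⁻¹ * (z k - z b)⁻¹) • c a b = 0)
    (hvan : ∀ b, b ≠ i → b ≠ j → b ≠ k → c j b = 0) (hij : i ≠ j) (hjk : j ≠ k) (hik : i ≠ k) :
    c j i + c j j = 0 := by
  obtain ⟨w, hw⟩ := exists_injective_of_infinite ι K
  set ζ : ι → K := fun m => w (if m = j then i else m)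
  have h := sum_sum_prod_erase_erase_smul_eq_zero hc ζ
  rw [sum_eq_single_of_mem j (mem_erase.mpr ⟨hij.symm, mem_univ j⟩) ?_] at h
  · have hsub : {i, j} ⊆ univ.erase k := by simp [insert_subset_iff, hik, hjk]
    rw [← sum_subset hsub fun b hb hbij => ?_, sum_pair hij,
      prod_erase_eq_prod_erase (mem_erase.mpr ⟨hik, mem_univ i⟩) (mem_erase.mpr ⟨hjk, mem_univ j⟩)
        (by simp [ζ, hij]), ← smul_add] at h
    · refine (smul_eq_zero.mp h).resolve_left (mul_ne_zero ?_ ?_) <;>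
        rw [Ne, prod_erase_erase_sub_eq_zero_iff] <;> rintro ⟨m, hm₁, hm₂, hm⟩ <;>
        simp only [ζ, hw.eq_iff] at hm <;> split_ifs at hm <;> simp_all
    · simp only [mem_insert, mem_singleton, not_or] at hbij
      rw [hvan b hbij.1 hbij.2 (ne_of_mem_erase hb), smul_zero]
  · intro a _ haj
    refine sum_eq_zero fun b _ => ?_
    rw [(prod_erase_erase_sub_eq_zero_iff ζ i a).mpr ⟨j, haj.symm, hij.symm, by simp [ζ, hij]⟩,
      zero_mul, zero_smul]

end Residues

theorem InfinitesimalBraidRelations.of_lie_gaudinHamiltonian_eq_zero {ι K L : Type*} [Fintype ι]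
    [DecidableEq ι] [Field K] [Infinite K] [LieRing L] [LieAlgebra K L] {A : ι → ι → L}
    (hA0 : ∀ i, A i i = 0) (hAsymm : ∀ i j, A i j = A j i)
    (h : ∀ z : ι → K, Function.Injective z →
      ∀ i k, ⁅gaudinHamiltonian A z i, gaudinHamiltonian A z k⁆ = 0) :
    InfinitesimalBraidRelations A := by
  have hc : ∀ i k, ∀ z : ι → K, Function.Injective z →
      ∑ a, ∑ b, ((z i - z a)⁻¹ * (z k - z b)⁻¹) • ⁅A i a, A k b⁆ = 0 :=
    fun i k z hz => (lie_gaudinHamiltonian A z i k).symm.trans (h z hz i k)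
  have hdisj : ∀ i j k l, i ≠ k → i ≠ l → j ≠ k → j ≠ l → ⁅A i j, A k l⁆ = 0 := by
    intro i j k l hik hil hjk hjl
    rcases eq_or_ne i j with rfl | hij
    · simp [hA0]
    rcases eq_or_ne k l with rfl | hkl
    · simp [hA0]
    exact eq_zero_of_forall_sum_sum_inv_smul_eq_zero (c := fun a b => ⁅A i a, A k b⁆) (hc i k)
      hij hik hil hjk hjl hkl
  refine ⟨hdisj, fun i j k hij hjk hik => ?_⟩
  have := add_eq_zero_of_forall_sum_sum_inv_smul_eq_zero (c := fun a b => ⁅A i a, A k b⁆)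
    (hc i k) (fun b hbi hbj hbk => hdisj i j k b hik hbi.symm hjk hbj.symm) hij hjk hik
  rw [lie_add, lie_add, lie_self, zero_add, hAsymm j k, add_comm]
  exact this

section Endomorphisms

attribute [local instance] LieRing.ofAssociativeRing

theorem infinitesimalBraidRelations_iff {ι R : Type*} [Ring R] (A : ι → ι → R) :
    InfinitesimalBraidRelations A ↔
      ((∀ i j k l : ι, ({i, j} : Set ι) ∩ {k, l} = ∅ → A i j * A k l - A k l * A i j = 0) ∧
        (∀ i j k : ι, i ≠ j → j ≠ k → i ≠ k →
          A i j * (A i j + A j k + A k i) - (A i j + A j k + A k i) * A i j = 0)) := by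
  have hdisj : ∀ i j k l : ι,
      ({i, j} : Set ι) ∩ {k, l} = ∅ ↔ i ≠ k ∧ i ≠ l ∧ j ≠ k ∧ j ≠ l := by
    simp [Set.eq_empty_iff_forall_notMem, and_assoc]
  simp only [← Ring.lie_def, hdisj]
  exact ⟨fun ⟨h₁, h₂⟩ => ⟨fun i j k l ⟨hik, hil, hjk, hjl⟩ => h₁ i j k l hik hil hjk hjl, h₂⟩,
    fun ⟨h₁, h₂⟩ => ⟨fun i j k l hik hil hjk hjl => h₁ i j k l ⟨hik, hil, hjk, hjl⟩, h₂⟩⟩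

variable {n : ℕ} {V : Type*} [AddCommGroup V] [Module ℂ V] {A : Fin n → Fin n → Module.End ℂ V}

theorem omegaEnd_eq_sum_smul_gaudinHamiltonian (hAsymm : ∀ i j, A i j = A j i)
    (z u : Fin n → ℂ) : omegaEnd n V A z u = ∑ i, u i • gaudinHamiltonian A z i := by
  simp only [gaudinHamiltonian, smul_sum, smul_smul]
  rw [← Fintype.sum_prod_type' (f := fun i b => (u i * (z i - z b)⁻¹) • A i b),
    sum_eq_sum_filter_lt_add_swap _ fun a => by simp, omegaEnd]
  refine sum_congr rfl fun p _ => ?_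
  rw [Prod.fst_swap, Prod.snd_swap, hAsymm p.2 p.1, ← add_smul, ← neg_sub (z p.1), inv_neg]
  congr 1
  ring

theorem omegaEnd_mul_comm_iff (hAsymm : ∀ i j, A i j = A j i) (z : Fin n → ℂ) :
    (∀ u v, omegaEnd n V A z u * omegaEnd n V A z v = omegaEnd n V A z v * omegaEnd n V A z u) ↔
      ∀ i k, ⁅gaudinHamiltonian A z i, gaudinHamiltonian A z k⁆ = 0 := by
  simp only [← commute_iff_eq, commute_iff_lie_eq, omegaEnd_eq_sum_smul_gaudinHamiltonian hAsymm]
  refine ⟨fun h i k => ?_, fun h u v => ?_⟩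
  · simpa [Pi.single_apply] using h (Pi.single i 1) (Pi.single k 1)
  · simp [sum_lie, lie_sum, smul_lie, lie_smul, h]

theorem omegaEnd_flat_iff (hA0 : ∀ i, A i i = 0) (hAsymm : ∀ i j, A i j = A j i) :
    (∀ z : Fin n → ℂ, Function.Injective z → ∀ u v : Fin n → ℂ,
        omegaEnd n V A z u * omegaEnd n V A z v = omegaEnd n V A z v * omegaEnd n V A z u)
      ↔ InfinitesimalBraidRelations A := by
  simp only [omegaEnd_mul_comm_iff hAsymm]
  exact ⟨InfinitesimalBraidRelations.of_lie_gaudinHamiltonian_eq_zero hA0 hAsymm,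
    fun hB _ hz => hB.lie_gaudinHamiltonian_eq_zero hAsymm hz⟩

end Endomorphisms

end Kohno

theorem flat_iff_infinitesimal_braid_relations_general
    (n : ℕ) (V : Type*) [AddCommGroup V] [Module ℂ V]
    (A : Fin n → Fin n → Module.End ℂ V)
    (hA0 : ∀ i, A i i = 0) (hAsymm : ∀ i j, A i j = A j i) :
    (∀ z : Fin n → ℂ, Function.Injective z → ∀ u v : Fin n → ℂ,
        omegaEnd n V A z u * omegaEnd n V A z v = omegaEnd n V A z v * omegaEnd n V A z u)
    ↔ ((∀ i j k l : Fin n, ({i, j} : Set (Fin n)) ∩ {k, l} = ∅ →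
          A i j * A k l - A k l * A i j = 0) ∧
        (∀ i j k : Fin n, i ≠ j → j ≠ k → i ≠ k →
          A i j * (A i j + A j k + A k i) - (A i j + A j k + A k i) * A i j = 0)) :=
  (Kohno.omegaEnd_flat_iff hA0 hAsymm).trans (Kohno.infinitesimalBraidRelations_iff A)

/-- Kohno's lemma: the connection `d - ω` on the trivial `V`-bundle over `ℂⁿ_*` is flat
(equivalently, `ω_z(u)` and `ω_z(v)` commute for all `z` with pairwise distinct
coordinates and all `u, v`) if and only if the `A_{ij}` satisfy the infinitesimal braid
relations. -/
theorem flat_iff_infinitesimal_braid_relations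
    (n : ℕ) (V : Type*) [AddCommGroup V] [Module ℂ V] [FiniteDimensional ℂ V]
    (A : Fin n → Fin n → Module.End ℂ V)
    (hA0 : ∀ i, A i i = 0) (hAsymm : ∀ i j, A i j = A j i) :
    (∀ z : Fin n → ℂ, Function.Injective z → ∀ u v : Fin n → ℂ,
        omegaEnd n V A z u * omegaEnd n V A z v = omegaEnd n V A z v * omegaEnd n V A z u)
    ↔ ((∀ i j k l : Fin n, ({i, j} : Set (Fin n)) ∩ {k, l} = ∅ →
          A i j * A k l - A k l * A i j = 0) ∧
        (∀ i j k : Fin n, i ≠ j → j ≠ k → i ≠ k →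
          A i j * (A i j + A j k + A k i) - (A i j + A j k + A k i) * A i j = 0)) :=
  flat_iff_infinitesimal_braid_relations_general n V A hA0 hAsymm
end

section
/- For all indices 1 ≤ i, j, k, l ≤ n: (1) f_{ij} = f_{ji}; (2) {f_{ij}, f_{kl}} = 0 whenever {i,j} ∩ {k,l} = ∅; (3) {f_{ij}, f_{ij} + f_{jk} + f_{ki}} = 0 whenever i, j, k are pairwise distinct. -/
open Matrix

/-- The gradient of `f : (ℝ³)ⁿ → ℝ` at `e` with respect to the `m`-th `ℝ³` factor:
its `a`-th component is the partial derivative of `f` in the direction of the `a`-th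
coordinate of the `m`-th factor. -/
noncomputable def grad3 (n : ℕ) (f : (Fin n → Fin 3 → ℝ) → ℝ)
    (e : Fin n → Fin 3 → ℝ) (m : Fin n) : Fin 3 → ℝ :=
  fun a => fderiv ℝ f e (Pi.single m (Pi.single a 1))

/-- The Lie–Poisson bracket on `(ℝ³)ⁿ`:
`{f,h}(e) = ∑ₘ eₘ ⬝ (∇ₘ f(e) × ∇ₘ h(e))`, the bracket determined by
`{xₘ,yₘ} = zₘ`, `{yₘ,zₘ} = xₘ`, `{zₘ,xₘ} = yₘ`. -/
noncomputable def pbracket (n : ℕ) (f h : (Fin n → Fin 3 → ℝ) → ℝ)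
    (e : Fin n → Fin 3 → ℝ) : ℝ :=
  ∑ m, e m ⬝ᵥ (crossProduct (grad3 n f e m) (grad3 n h e m))

/-- `f_{ij}(e) = ‖e_i + e_j‖²`. -/
def fquad (n : ℕ) (i j : Fin n) (e : Fin n → Fin 3 → ℝ) : ℝ :=
  (e i + e j) ⬝ᵥ (e i + e j)

noncomputable def cCLM (n : ℕ) (i : Fin n) (a : Fin 3) : (Fin n → Fin 3 → ℝ) →L[ℝ] ℝ :=
  (ContinuousLinearMap.proj (R := ℝ) (φ := fun _ : Fin 3 => ℝ) a).comp
    (ContinuousLinearMap.proj (R := ℝ) (φ := fun _ : Fin n => (Fin 3 → ℝ)) i)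

lemma fquad_eq (n : ℕ) (i j : Fin n) :
    fquad n i j = fun e => ∑ a, (cCLM n i a e + cCLM n j a e) * (cCLM n i a e + cCLM n j a e) := by
  funext e
  simp [fquad, dotProduct, cCLM]

lemma hasFDerivAt_fquad (n : ℕ) (i j : Fin n) (e : Fin n → Fin 3 → ℝ) :
    HasFDerivAt (fquad n i j)
      (∑ a, ((cCLM n i a e + cCLM n j a e) • (cCLM n i a + cCLM n j a)
        + (cCLM n i a e + cCLM n j a e) • (cCLM n i a + cCLM n j a))) e := by
  rw [fquad_eq]
  exact HasFDerivAt.fun_sum fun a _ =>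
    (((cCLM n i a).hasFDerivAt.add (cCLM n j a).hasFDerivAt).mul
      ((cCLM n i a).hasFDerivAt.add (cCLM n j a).hasFDerivAt))

lemma grad3_fquad (n : ℕ) (i j : Fin n) (e : Fin n → Fin 3 → ℝ) (m : Fin n) :
    grad3 n (fquad n i j) e m = fun a =>
      ((if i = m then 1 else 0) + (if j = m then 1 else 0)) * (2 * (e i a + e j a)) := by
  funext a
  have h := (hasFDerivAt_fquad n i j e).fderiv
  simp only [grad3, h, ContinuousLinearMap.coe_sum', Finset.sum_apply,
    ContinuousLinearMap.add_apply, ContinuousLinearMap.coe_smul', Pi.smul_apply,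
    ContinuousLinearMap.smul_apply, cCLM, ContinuousLinearMap.coe_comp',
    Function.comp_apply, ContinuousLinearMap.proj_apply, Pi.single_apply, smul_eq_mul]
  simp only [ite_apply, Pi.zero_apply, Pi.single_apply]
  trans ∑ b : Fin 3, (if b = a then
      ((if i = m then (1:ℝ) else 0) + if j = m then 1 else 0) * (2 * (e i b + e j b)) else 0)
  · refine Finset.sum_congr rfl fun b _ => ?_
    by_cases hb : b = a <;> by_cases h1 : i = m <;> by_cases h2 : j = m <;>
      simp [hb, h1, h2] <;> ring
  · rw [Finset.sum_ite_eq' Finset.univ a]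
    simp

lemma grad3_fquad_zero (n : ℕ) (i j : Fin n) (e : Fin n → Fin 3 → ℝ) (m : Fin n)
    (h1 : i ≠ m) (h2 : j ≠ m) : grad3 n (fquad n i j) e m = 0 := by
  funext a
  simp [grad3_fquad, h1, h2]

/-- The bending Hamiltonians `f_{ij}` satisfy: `f_{ij} = f_{ji}`; brackets of pairs with
disjoint index sets vanish; and `{f_{ij}, f_{ij} + f_{jk} + f_{ki}} = 0` for pairwise
distinct `i, j, k`. -/
theorem bending_hamiltonians_infinitesimal_braid_relations (n : ℕ) :
    (∀ i j : Fin n, fquad n i j = fquad n j i) ∧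
    (∀ i j k l : Fin n, ({i, j} : Set (Fin n)) ∩ {k, l} = ∅ →
      ∀ e, pbracket n (fquad n i j) (fquad n k l) e = 0) ∧
    (∀ i j k : Fin n, i ≠ j → j ≠ k → i ≠ k →
      ∀ e, pbracket n (fquad n i j)
        (fun e' => fquad n i j e' + fquad n j k e' + fquad n k i e') e = 0) := by
  refine ⟨fun i j => ?_, fun i j k l hdisj e => ?_, fun i j k hij hjk hik e => ?_⟩
  · funext e
    simp only [fquad]
    rw [add_comm]
  · have hmem : ∀ m : Fin n, m ∈ ({i, j} : Set (Fin n)) → m ∉ ({k, l} : Set (Fin n)) := by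
      intro m h1 h2
      have : m ∈ ({i, j} : Set (Fin n)) ∩ {k, l} := ⟨h1, h2⟩
      rw [hdisj] at this
      exact this
    apply Finset.sum_eq_zero
    intro m _
    by_cases hmi : i = m
    · have hk : k ≠ m := fun h => hmem m (Or.inl hmi.symm) (Or.inl h.symm)
      have hl : l ≠ m := fun h => hmem m (Or.inl hmi.symm) (Or.inr h.symm)
      rw [grad3_fquad_zero n k l e m hk hl]
      simp
    · by_cases hmj : j = m
      · have hk : k ≠ m := fun h => hmem m (Or.inr hmj.symm) (Or.inl h.symm)
        have hl : l ≠ m := fun h => hmem m (Or.inr hmj.symm) (Or.inr h.symm)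
        rw [grad3_fquad_zero n k l e m hk hl]
        simp
      · rw [grad3_fquad_zero n i j e m hmi hmj]
        simp
  · have hFd : ∀ m, grad3 n (fun e' => fquad n i j e' + fquad n j k e' + fquad n k i e') e m
        = fun a => grad3 n (fquad n i j) e m a + grad3 n (fquad n j k) e m a
            + grad3 n (fquad n k i) e m a := by
      intro m
      funext a
      have h := (((hasFDerivAt_fquad n i j e).fun_add (hasFDerivAt_fquad n j k e)).fun_add
        (hasFDerivAt_fquad n k i e)).fderiv
      simp only [grad3, h, (hasFDerivAt_fquad n i j e).fderiv,
        (hasFDerivAt_fquad n j k e).fderiv, (hasFDerivAt_fquad n k i e).fderiv,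
        ContinuousLinearMap.add_apply]
    rw [pbracket]
    rw [← Finset.sum_subset (Finset.subset_univ ({i, j} : Finset (Fin n)))
      (fun m _ hm => ?_)]
    · rw [Finset.sum_insert (by simp [hij]), Finset.sum_singleton]
      rw [hFd i, hFd j]
      simp only [grad3_fquad]
      simp only [if_neg (Ne.symm hij), if_neg hij, if_neg hjk,
        if_neg (Ne.symm hjk), if_neg hik, if_neg (Ne.symm hik), if_pos rfl, if_true,
        eq_self_iff_true]
      simp only [cross_apply, dotProduct, Fin.sum_univ_three, Matrix.cons_val_zero,
        Matrix.cons_val_one, Matrix.head_cons, Matrix.cons_val_two, Matrix.tail_cons]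
      ring
    · simp only [Finset.mem_insert, Finset.mem_singleton, not_or] at hm
      rw [grad3_fquad_zero n i j e m (fun h => hm.1 h.symm) (fun h => hm.2 h.symm)]
      simp
end

section
/- Let u ∈ ℝ³ be a unit vector and let w ∈ ℂ³ satisfy u × w = i·w, where × denotes the ℂ-bilinear extension of the cross product to ℂ³. Fix ε_k ∈ {±1} and r_k > 0 for 1 ≤ k ≤ n. For c ∈ ℂⁿ define δ ∈ (ℂ³)ⁿ by δ_k = c_k w, and let Ã_{ij}(δ) ∈ (ℂ³)ⁿ have i-th component ε_j r_j (u × δ_i) − ε_i r_i (u × δ_j), j-th component ε_i r_i (u × δ_j) − ε_j r_j (u × δ_i), and all other components 0 (the complexified linearization of the bending field B_{ij}). Then for every k, Ã_{ij}(δ)_k = i · (c · J_{ij}(μ))_k · w, where μ = (ε_1 r_1, …, ε_n r_n), J_{ij}(μ) is the Jordan–Pochhammer matrix with these real parameters, and c · J denotes right multiplication of the row vector c by J. That is, on the +i-eigenspace of the almost complex structure δ ↦ (u × δ_k)_k, the linearized bending operator Ã_{ij} acts as √−1 · J_{ij}(ε_i r_i, ε_j r_j). -/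
open Matrix

/-- The complexified linearization `Ã_{ij}` of the bending field `B_{ij}` at the
degenerate configuration with data `a_k = ε_k r_k` along the (complexified) axis `u`. -/
def AtildeC (n : ℕ) (u : Fin 3 → ℂ) (a : Fin n → ℂ) (i j : Fin n)
    (δ : Fin n → Fin 3 → ℂ) : Fin n → Fin 3 → ℂ :=
  fun k =>
    if k = i then a j • crossProduct u (δ i) - a i • crossProduct u (δ j)
    else if k = j then a i • crossProduct u (δ j) - a j • crossProduct u (δ i)
    else 0

lemma vecMul_JP_apply (n : ℕ) (lam c : Fin n → ℂ) (i j k : Fin n) :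
    vecMul c (JP n lam i j) k =
      if k = i then c i * lam j - c j * lam i
      else if k = j then c j * lam i - c i * lam j else 0 := by
  by_cases hij : i = j
  · subst hij
    split_ifs <;> simp [JP, *]
  have hsupp : ∀ m, m ≠ i ∧ m ≠ j → c m * JP n lam i j m k = 0 := fun m hm => by
    simp [JP, hij, hm.1, hm.2]
  rw [vecMul, dotProduct, Fintype.sum_eq_add i j hij hsupp]
  split_ifs with hki hkj <;> subst_vars <;> simp [JP, Ne.symm hij, *] <;> ring

lemma AtildeC_smul_eigenvector (n : ℕ) (u w : Fin 3 → ℂ) (μ : ℂ)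
    (hw : crossProduct u w = μ • w) (a c : Fin n → ℂ) (i j k : Fin n) :
    AtildeC n u a i j (fun m => c m • w) k = (μ * vecMul c (JP n a i j) k) • w := by
  simp only [AtildeC, vecMul_JP_apply, map_smul, hw, smul_smul, ← sub_smul]
  split_ifs <;> first | simp | (congr 1; ring)

theorem Atilde_acts_as_jordan_pochhammer_general (n : ℕ) (u : Fin 3 → ℝ)
    (w : Fin 3 → ℂ) (hw : crossProduct (fun a => (u a : ℂ)) w = Complex.I • w)
    (eps r : Fin n → ℝ)
    (i j : Fin n) (c : Fin n → ℂ) :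
    ∀ k, AtildeC n (fun a => (u a : ℂ)) (fun m => ((eps m * r m : ℝ) : ℂ)) i j
        (fun m => c m • w) k =
      (Complex.I * Matrix.vecMul c (JP n (fun m => ((eps m * r m : ℝ) : ℂ)) i j) k) • w :=
  AtildeC_smul_eigenvector n _ w Complex.I hw _ c i j

/-- On the `+i`-eigenspace of the almost complex structure `δ ↦ (u × δ_k)_k` (spanned by
vectors `δ_k = c_k w` with `u × w = i w`), the linearized bending operator `Ã_{ij}` acts
as `√−1 ⋅ J_{ij}(ε_i r_i, ε_j r_j)` acting on row vectors `c` on the right. -/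
theorem Atilde_acts_as_jordan_pochhammer (n : ℕ) (u : Fin 3 → ℝ) (hu : u ⬝ᵥ u = 1)
    (w : Fin 3 → ℂ) (hw : crossProduct (fun a => (u a : ℂ)) w = Complex.I • w)
    (eps r : Fin n → ℝ) (heps : ∀ k, eps k = 1 ∨ eps k = -1) (hr : ∀ k, 0 < r k)
    (i j : Fin n) (hij : i < j) (c : Fin n → ℂ) :
    ∀ k, AtildeC n (fun a => (u a : ℂ)) (fun m => ((eps m * r m : ℝ) : ℂ)) i j
        (fun m => c m • w) k =
      (Complex.I * Matrix.vecMul c (JP n (fun m => ((eps m * r m : ℝ) : ℂ)) i j) k) • w :=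
  Atilde_acts_as_jordan_pochhammer_general n u w hw eps r i j c
end

section
/- Let n ≥ 1, let λ ∈ ℂⁿ satisfy Σ_{k=1}^n λ_k = 0, and let z_1,…,z_n ∈ ℂ. For |ξ| > max_k |z_k| define the single-valued branch Φ_∞(ξ) = ∏_{k=1}^n exp(λ_k Log(1 − z_k/ξ)), where Log is the principal branch of the logarithm (each 1 − z_k/ξ has positive real part, so this is well defined and holomorphic). Then for every R > max_k |z_k| and every index i, the counterclockwise circle integral satisfies (1/(2πi)) ∮_{|ξ| = R} Φ_∞(ξ)/(ξ − z_i) dξ = 1. (This is the evaluation of the pairing of the class w_∞ of a large circle with the hypergeometric form η_i = λ_i Φ dξ/(ξ − z_i), which up to the factor λ_i and the orientation convention is the identity ∫_{w_∞} η_i = −λ_i.) -/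
open Real

/-- Residue computation at infinity: if `∑ λ_k = 0` and `Φ_∞` is the single-valued
branch `Φ_∞(ξ) = ∏ₖ exp(λ_k Log(1 − z_k/ξ))` of the hypergeometric integrand on the
region `|ξ| > maxₖ |z_k|`, then for every `R` larger than all `|z_k|` and every index
`i`, `(1/(2πi)) ∮_{|ξ|=R} Φ_∞(ξ)/(ξ − z_i) dξ = 1`. -/
theorem circle_integral_hypergeometric_eq_one
    (n : ℕ) (hn : 1 ≤ n) (lam : Fin n → ℂ) (hlam : ∑ k, lam k = 0)
    (z : Fin n → ℂ) (R : ℝ) (hR : ∀ k, ‖z k‖ < R) (i : Fin n) :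
    (2 * (Real.pi : ℂ) * Complex.I)⁻¹ *
        (∮ ξ in C(0, R),
          (∏ k, Complex.exp (lam k * Complex.log (1 - z k / ξ))) / (ξ - z i)) = 1 := by
  have hR0 : 0 < R := lt_of_le_of_lt (norm_nonneg _) (hR i)
  obtain ⟨r, hr⟩ : ∃ r : ℝ, r = R⁻¹ := ⟨_, rfl⟩
  have hr0 : 0 < r := hr ▸ inv_pos.mpr hR0
  obtain ⟨g, hg⟩ : ∃ g : ℂ → ℂ, g = fun w =>
    (∏ k, Complex.exp (lam k * Complex.log (1 - z k * w))) / (1 - z i * w) := ⟨_, rfl⟩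
  have key : ∀ w : ℂ, ‖w‖ ≤ r → ∀ k : Fin n, ‖z k * w‖ < 1 := by
    intro w hw k
    rw [hr] at hw
    have h1 : ‖z k * w‖ ≤ ‖z k‖ * R⁻¹ := by
      rw [norm_mul]
      exact mul_le_mul_of_nonneg_left hw (norm_nonneg _)
    have h2 : ‖z k‖ * R⁻¹ < R * R⁻¹ :=
      mul_lt_mul_of_pos_right (hR k) (inv_pos.mpr hR0)
    have h3 : R * R⁻¹ = 1 := mul_inv_cancel₀ (ne_of_gt hR0)
    linarith
  have hslit : ∀ w : ℂ, ‖w‖ ≤ r → ∀ k : Fin n,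
      (1 - z k * w) ∈ Complex.slitPlane := by
    intro w hw k
    rw [Complex.mem_slitPlane_iff]
    left
    have h1 : (z k * w).re < 1 := lt_of_le_of_lt (Complex.re_le_norm _) (key w hw k)
    simp only [Complex.sub_re, Complex.one_re]
    linarith
  have hne : ∀ w : ℂ, ‖w‖ ≤ r → (1 - z i * w) ≠ 0 := by
    intro w hw h
    have h1 : z i * w = 1 := by linear_combination -h
    have h2 := key w hw i
    rw [h1] at h2
    simp at h2
  have hdiff : ∀ w ∈ Metric.closedBall (0 : ℂ) r, DifferentiableAt ℂ g w := by
    intro w hw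
    rw [Metric.mem_closedBall, dist_zero_right] at hw
    rw [hg]
    apply DifferentiableAt.div
    · apply DifferentiableAt.fun_finsetProd
      intro k _
      apply DifferentiableAt.cexp
      apply DifferentiableAt.const_mul
      exact ((Complex.differentiableAt_log (hslit w hw k)).comp w
        (by fun_prop : DifferentiableAt ℂ (fun w : ℂ => 1 - z k * w) w))
    · fun_prop
    · exact hne w hw
  have hdc : DiffContOnCl ℂ g (Metric.ball (0 : ℂ) r) := by
    apply DifferentiableOn.diffContOnCl
    rw [closure_ball (0 : ℂ) (ne_of_gt hr0)]
    exact fun w hw => (hdiff w hw).differentiableWithinAt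
  have hg0 : g 0 = 1 := by rw [hg]; simp
  have cauchy : (∮ w in C(0, r), (w - 0)⁻¹ • g w) = (2 * ↑π * Complex.I : ℂ) • g 0 :=
    hdc.circleIntegral_sub_inv_smul (by simpa using hr0)
  have hinv : ∀ θ : ℝ, (circleMap 0 R θ)⁻¹ = circleMap 0 r (-θ) := by
    intro θ
    rw [hr]
    simp only [circleMap, zero_add, mul_inv, ← Complex.exp_neg]
    rw [Complex.ofReal_inv]
    push_cast
    ring_nf
  have hmain : (∮ ξ in C(0, R),
      (∏ k, Complex.exp (lam k * Complex.log (1 - z k / ξ))) / (ξ - z i))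
      = ∮ w in C(0, r), (w - 0)⁻¹ • g w := by
    simp only [circleIntegral]
    have lhs_eq : (∫ θ in (0:ℝ)..2 * π, deriv (circleMap 0 R) θ •
        ((∏ k, Complex.exp (lam k * Complex.log (1 - z k / circleMap 0 R θ))) /
          (circleMap 0 R θ - z i)))
        = ∫ θ in (0:ℝ)..2 * π, Complex.I * g (circleMap 0 r (-θ)) := by
      apply intervalIntegral.integral_congr
      intro θ _
      have hξne : circleMap 0 R θ ≠ 0 := circleMap_ne_center (ne_of_gt hR0)
      have habs : ‖(circleMap 0 R θ)⁻¹‖ ≤ r := by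
        rw [norm_inv, norm_circleMap_zero, abs_of_pos hR0, hr]
      have hzine : circleMap 0 R θ - z i ≠ 0 := by
        intro h
        have h1 : circleMap 0 R θ = z i := by linear_combination h
        have h2 := hR i
        rw [← h1, norm_circleMap_zero, abs_of_pos hR0] at h2
        exact lt_irrefl _ h2
      simp only [deriv_circleMap, ← hinv θ, smul_eq_mul, hg, div_eq_mul_inv]
      have hden : 1 - z i * (circleMap 0 R θ)⁻¹
          = (circleMap 0 R θ - z i) * (circleMap 0 R θ)⁻¹ := by
        field_simp
      rw [hden]
      field_simp
    rw [lhs_eq, intervalIntegral.integral_const_mul]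
    have rhs_eq : (∫ θ in (0:ℝ)..2 * π, deriv (circleMap 0 r) θ •
        ((circleMap 0 r θ - 0)⁻¹ • g (circleMap 0 r θ)))
        = ∫ θ in (0:ℝ)..2 * π, Complex.I * g (circleMap 0 r θ) := by
      apply intervalIntegral.integral_congr
      intro θ _
      have hwne : circleMap 0 r θ ≠ 0 := circleMap_ne_center (ne_of_gt hr0)
      simp only [deriv_circleMap, smul_eq_mul, sub_zero]
      rw [mul_comm (circleMap 0 r θ) Complex.I, mul_assoc, ← mul_assoc (circleMap 0 r θ),
        mul_inv_cancel₀ hwne, one_mul]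
    rw [rhs_eq, intervalIntegral.integral_const_mul]
    congr 1
    have hper : Function.Periodic (fun θ => g (circleMap 0 r θ)) (2 * π) :=
      (periodic_circleMap 0 r).comp g
    calc (∫ θ in (0:ℝ)..2 * π, g (circleMap 0 r (-θ)))
        = ∫ θ in (-(2 * π))..(-(0:ℝ)), g (circleMap 0 r θ) :=
          intervalIntegral.integral_comp_neg (fun θ => g (circleMap 0 r θ))
      _ = ∫ θ in (-(2 * π))..(-(2 * π) + 2 * π), g (circleMap 0 r θ) := by norm_num
      _ = ∫ θ in (0:ℝ)..(0 + 2 * π), g (circleMap 0 r θ) :=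
          hper.intervalIntegral_add_eq _ _
      _ = ∫ θ in (0:ℝ)..2 * π, g (circleMap 0 r θ) := by norm_num
  rw [hmain, cauchy, hg0, smul_eq_mul, mul_one,
    inv_mul_cancel₀ Complex.two_pi_I_ne_zero]
end
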